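/- arXiv:2002.06428 — 4 statements merged into one kernel-verified Lean document; each statement's English description precedes it below -/
import Mathlib

section
/- For each nonnegative integer n and positive integer ρ, y_n(ρ+1; t) = -e^t ∫_t^∞ e^{-x} y_n(ρ; x) dx for all real t, where y_n(ρ; x) = (-1)^ρ ∑_{j=0}^n C(n-j+ρ-1, n-j) x^j/j!. -/
open Finset

/-- `y_n(ρ; x) = (-1)^ρ ∑_{j=0}^n C(n-j+ρ-1, n-j) x^j/j!` as a real function. -/
noncomputable def yyR (ρ n : ℕ) (x : ℝ) : ℝ :=
  (-1 : ℝ) ^ ρ *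
    ∑ j ∈ range (n + 1), ((n - j + ρ - 1).choose (n - j) : ℝ) * x ^ j / (j.factorial : ℝ)

open MeasureTheory Set Filter Real Asymptotics

lemma yyR_continuous (ρ n : ℕ) : Continuous (yyR ρ n) := by
  unfold yyR
  exact continuous_const.mul (continuous_finset_sum _ fun j _ =>
    ((continuous_const.mul (continuous_pow j)).div_const _))

lemma yyR_hasDerivAt (ρ n : ℕ) (x : ℝ) :
    HasDerivAt (yyR (ρ + 1) n) (yyR (ρ + 1) n x + yyR ρ n x) x := by
  have h : HasDerivAt (yyR (ρ + 1) n)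
      ((-1 : ℝ) ^ (ρ + 1) * ∑ j ∈ range (n + 1),
        ((n - j + (ρ + 1) - 1).choose (n - j) : ℝ) * ((j : ℝ) * x ^ (j - 1)) /
          (j.factorial : ℝ)) x := by
    apply HasDerivAt.const_mul
    apply HasDerivAt.fun_sum
    intro j _
    exact ((hasDerivAt_pow j x).const_mul _).div_const _
  convert h using 1
  have key : ∑ j ∈ range (n + 1),
      ((n - j + (ρ + 1) - 1).choose (n - j) : ℝ) * ((j : ℝ) * x ^ (j - 1)) / (j.factorial : ℝ)
      = ∑ j ∈ range (n + 1),
        (((n - j + (ρ + 1) - 1).choose (n - j) : ℝ) - ((n - j + ρ - 1).choose (n - j) : ℝ))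
          * x ^ j / (j.factorial : ℝ) := by
    rw [Finset.sum_range_succ' (fun j => ((n - j + (ρ + 1) - 1).choose (n - j) : ℝ) *
      ((j : ℝ) * x ^ (j - 1)) / (j.factorial : ℝ))]
    rw [Finset.sum_range_succ (fun j =>
      (((n - j + (ρ + 1) - 1).choose (n - j) : ℝ) - ((n - j + ρ - 1).choose (n - j) : ℝ))
        * x ^ j / (j.factorial : ℝ))]
    have hlast : (n - n : ℕ) = 0 := by omega
    simp only [hlast, Nat.choose_zero_right, Nat.cast_zero, Nat.cast_one, zero_mul, mul_zero,
      zero_div, add_zero, sub_self]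
    refine Finset.sum_congr rfl fun i hi => ?_
    rw [Finset.mem_range] at hi
    -- Pascal: C(n-i+ρ, n-i) = C(n-i-1+ρ, n-i-1) + C(n-i+ρ-1, n-i)  for i < n
    have hnat : (n - i + (ρ + 1) - 1).choose (n - i)
        = (n - (i + 1) + (ρ + 1) - 1).choose (n - (i + 1)) + (n - i + ρ - 1).choose (n - i) := by
      obtain ⟨k, hk⟩ : ∃ k, n - i = k + 1 := ⟨n - i - 1, by omega⟩
      have h1 : n - i + (ρ + 1) - 1 = (k + ρ) + 1 := by omega
      have h2 : n - (i + 1) + (ρ + 1) - 1 = k + ρ := by omega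
      have h3 : n - (i + 1) = k := by omega
      have h4 : n - i + ρ - 1 = k + ρ := by omega
      rw [h1, h2, h3, h4, hk, Nat.choose_succ_succ']
    have hcast : ((n - i + (ρ + 1) - 1).choose (n - i) : ℝ) - ((n - i + ρ - 1).choose (n - i) : ℝ)
        = ((n - (i + 1) + (ρ + 1) - 1).choose (n - (i + 1)) : ℝ) := by
      rw [hnat]; push_cast; ring
    rw [hcast]
    have hfact : ((i + 1).factorial : ℝ) = (i + 1 : ℝ) * (i.factorial : ℝ) := by
      rw [Nat.factorial_succ]; push_cast; ring
    have hi0 : (i.factorial : ℝ) ≠ 0 := Nat.cast_ne_zero.mpr i.factorial_ne_zero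
    simp only [Nat.add_sub_cancel]
    rw [hfact]
    push_cast
    field_simp
  unfold yyR
  rw [key]
  have hsign : (-1 : ℝ) ^ ρ = -(-1 : ℝ) ^ (ρ + 1) := by rw [pow_succ]; ring
  rw [hsign, Finset.mul_sum, Finset.mul_sum, Finset.mul_sum, ← Finset.sum_add_distrib]
  apply Finset.sum_congr rfl
  intro j _
  ring

lemma yyR_exp_tendsto (ρ n : ℕ) {c : ℝ} (hc : 0 < c) :
    Tendsto (fun x => Real.exp (-c * x) * yyR ρ n x) atTop (nhds 0) := by
  have h : ∀ j : ℕ, Tendsto (fun x : ℝ => x ^ j * Real.exp (-c * x)) atTop (nhds 0) := by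
    intro j
    have := tendsto_rpow_mul_exp_neg_mul_atTop_nhds_zero (j : ℝ) c hc
    apply this.congr'
    filter_upwards [eventually_gt_atTop (0 : ℝ)] with x hx
    rw [Real.rpow_natCast]
  have h2 : Tendsto (fun x : ℝ => (-1 : ℝ) ^ ρ * ∑ j ∈ range (n + 1),
      ((n - j + ρ - 1).choose (n - j) : ℝ) / (j.factorial : ℝ) *
        (x ^ j * Real.exp (-c * x))) atTop (nhds ((-1 : ℝ) ^ ρ * ∑ j ∈ range (n + 1),
        ((n - j + ρ - 1).choose (n - j) : ℝ) / (j.factorial : ℝ) * 0)) := by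
    apply Tendsto.const_mul
    exact tendsto_finset_sum _ fun j _ => ((h j).const_mul _)
  simp only [mul_zero, Finset.sum_const_zero] at h2
  have heq : (fun x => Real.exp (-c * x) * yyR ρ n x) = fun x : ℝ =>
      (-1 : ℝ) ^ ρ * ∑ j ∈ range (n + 1),
        ((n - j + ρ - 1).choose (n - j) : ℝ) / (j.factorial : ℝ) * (x ^ j * Real.exp (-c * x)) := by
    funext x
    unfold yyR
    simp only [Finset.mul_sum]
    exact Finset.sum_congr rfl fun j _ => by ring
  rw [heq]
  exact h2

theorem stmt5 (n ρ : ℕ) (hρ : 1 ≤ ρ) (t : ℝ) :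
    yyR (ρ + 1) n t = -Real.exp t * ∫ x in Set.Ioi t, Real.exp (-x) * yyR ρ n x := by
  have hderiv : ∀ x ∈ Ici t, HasDerivAt (fun x => Real.exp (-x) * yyR (ρ + 1) n x)
      (Real.exp (-x) * yyR ρ n x) x := by
    intro x _
    have he : HasDerivAt (fun x : ℝ => Real.exp (-x)) (-Real.exp (-x)) x := by
      simpa using ((hasDerivAt_id x).neg).exp
    have := he.fun_mul (yyR_hasDerivAt ρ n x)
    exact this.congr_deriv (by ring)
  have hint : IntegrableOn (fun x => Real.exp (-x) * yyR ρ n x) (Ioi t) := by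
    apply integrable_of_isBigO_exp_neg (b := 1/2) (by norm_num)
    · exact ((Real.continuous_exp.comp continuous_neg).mul (yyR_continuous ρ n)).continuousOn
    · have ht := yyR_exp_tendsto ρ n (c := (1/2 : ℝ)) (by norm_num)
      have h1 : (fun x => Real.exp (-(1/2 : ℝ) * x) * yyR ρ n x) =O[atTop]
          (fun _ : ℝ => (1 : ℝ)) := ht.isBigO_one ℝ
      have h2 : (fun x => Real.exp (-(1/2 : ℝ) * x) * yyR ρ n x * Real.exp (-(1/2 : ℝ) * x))
          =O[atTop] (fun x : ℝ => (1 : ℝ) * Real.exp (-(1/2 : ℝ) * x)) :=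
        h1.mul (isBigO_refl (fun x : ℝ => Real.exp (-(1/2 : ℝ) * x)) atTop)
      have heq : (fun x => Real.exp (-x) * yyR ρ n x) =
          fun x => Real.exp (-(1/2 : ℝ) * x) * yyR ρ n x * Real.exp (-(1/2 : ℝ) * x) := by
        funext x
        rw [mul_comm (Real.exp (-(1/2 : ℝ) * x)) (yyR ρ n x), mul_assoc, ← Real.exp_add]
        ring_nf
      rw [heq]
      simpa using h2
  have htend : Tendsto (fun x => Real.exp (-x) * yyR (ρ + 1) n x) atTop (nhds 0) := by
    have := yyR_exp_tendsto (ρ + 1) n (c := 1) one_pos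
    simpa using this
  have key := integral_Ioi_of_hasDerivAt_of_tendsto' hderiv hint htend
  rw [key, zero_sub, neg_mul_neg, ← mul_assoc, ← Real.exp_add]
  simp
end

section
/- For x ≠ 0, y_n(ρ; x) = ((-1)^ρ/n!) x^n ∑_{k=0}^n (-n)_k (ρ)_k (-1/x)^k / k!, i.e., y_n(ρ; x) = ((-1)^ρ/n!) x^n · ₂F₀(-n, ρ; -; -1/x). -/
open Polynomial Finset

/-- Pochhammer symbol (rising factorial) `(c)_k` over ℂ. -/
noncomputable def poch (c : ℂ) (k : ℕ) : ℂ := ∏ i ∈ Finset.range k, (c + i)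

/-- `y_n(ρ; x) = (-1)^ρ ∑_{j=0}^n C(n-j+ρ-1, n-j) x^j/j!` as a polynomial over ℂ. -/
noncomputable def yy (ρ n : ℕ) : Polynomial ℂ :=
  C ((-1 : ℂ) ^ ρ) *
    ∑ j ∈ range (n + 1), C (((n - j + ρ - 1).choose (n - j) : ℂ) / (j.factorial : ℂ)) * X ^ j

lemma poch_neg_nat (n k : ℕ) :
    poch (-(n : ℂ)) k = (-1) ^ k * (n.descFactorial k : ℂ) := by
  induction k with
  | zero => simp [poch]
  | succ k ih =>
    rw [poch, Finset.prod_range_succ, ← poch, ih, Nat.descFactorial_succ]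
    rcases le_or_gt k n with h | h
    · push_cast [h]
      ring
    · rw [Nat.descFactorial_eq_zero_iff_lt.mpr h]
      simp

lemma poch_nat (ρ k : ℕ) : poch (ρ : ℂ) k = (ρ.ascFactorial k : ℂ) := by
  induction k with
  | zero => simp [poch]
  | succ k ih =>
    rw [poch, Finset.prod_range_succ, ← poch, ih, Nat.ascFactorial_succ]
    push_cast
    ring

theorem stmt8 (n ρ : ℕ) (hρ : 1 ≤ ρ) (x : ℂ) (hx : x ≠ 0) :
    (yy ρ n).eval x =
      (-1 : ℂ) ^ ρ / (n.factorial : ℂ) * x ^ n *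
        ∑ k ∈ range (n + 1),
          poch (-(n : ℂ)) k * poch (ρ : ℂ) k * (-1 / x) ^ k / (k.factorial : ℂ) := by
  have hfac : ∀ m : ℕ, (m.factorial : ℂ) ≠ 0 := fun m =>
    Nat.cast_ne_zero.mpr m.factorial_ne_zero
  rw [yy]
  simp only [eval_mul, eval_C, eval_finset_sum, eval_mul, eval_pow, eval_X, eval_C]
  rw [← Finset.sum_range_reflect
    (fun j => (((n - j + ρ - 1).choose (n - j) : ℂ) / (j.factorial : ℂ)) * x ^ j) (n + 1)]
  rw [Finset.mul_sum, Finset.mul_sum]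
  refine Finset.sum_congr rfl fun k hk => ?_
  have hk' : k ≤ n := Nat.lt_succ_iff.mp (Finset.mem_range.mp hk)
  rw [poch_neg_nat, poch_nat, Nat.descFactorial_eq_factorial_mul_choose,
    Nat.ascFactorial_eq_factorial_mul_choose']
  have h0 : n + 1 - 1 - k = n - k := by omega
  have h2 : n - (n - k) + ρ - 1 = ρ + k - 1 := by omega
  have h3 : n - (n - k) = k := by omega
  rw [h0, h2, h3]
  have hxn : x ^ n = x ^ (n - k) * x ^ k := by
    rw [← pow_add, Nat.sub_add_cancel hk']
  have hnf : (n.factorial : ℂ) = (n.choose k : ℂ) * k.factorial * (n - k).factorial := by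
    rw [← Nat.cast_mul, ← Nat.cast_mul, Nat.choose_mul_factorial_mul_factorial hk']
  rw [hxn, hnf]
  have hchoose : ((n.choose k : ℂ)) ≠ 0 :=
    Nat.cast_ne_zero.mpr (Nat.choose_pos hk').ne'
  push_cast
  simp only [div_pow]
  have hxk : x ^ n ≠ 0 := pow_ne_zero _ hx
  field_simp [hfac k, hfac (n-k), hchoose, pow_ne_zero k hx]
  ring_nf
  simp [pow_mul']
end

section
/- For every nonnegative integer n and positive integer ρ, the polynomial y = y_n(ρ; ·) satisfies x ∑_{k=0}^ρ (-1)^{ρ-k} C(ρ,k) y^{(k+1)}(x) - n ∑_{k=0}^ρ (-1)^{ρ-k} C(ρ,k) y^{(k)}(x) = 0 for all x. -/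
open Polynomial Finset

lemma yy_coeff (ρ n j : ℕ) :
    (yy ρ n).coeff j =
      if j ≤ n then (-1 : ℂ) ^ ρ * (((n - j + ρ - 1).choose (n - j) : ℂ) / (j.factorial : ℂ))
      else 0 := by
  simp only [yy, coeff_C_mul, finset_sum_coeff, coeff_C_mul, coeff_X_pow, mul_ite, mul_one,
    mul_zero]
  rw [Finset.sum_ite_eq (range (n + 1)) j]
  simp only [mem_range, Nat.lt_succ_iff]
  split <;> simp

lemma yy_step (ρ n : ℕ) : derivative (yy (ρ + 1) n) - yy (ρ + 1) n = yy ρ n := by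
  ext j
  rw [coeff_sub, coeff_derivative, yy_coeff, yy_coeff, yy_coeff]
  rcases lt_trichotomy j n with h | h | h
  · rw [if_pos h.le, if_pos (by omega : j + 1 ≤ n), if_pos h.le]
    have h1 : n - j + (ρ + 1) - 1 = (n - j - 1 + ρ) + 1 := by omega
    have h2 : n - j = (n - j - 1) + 1 := by omega
    have h3 : n - (j + 1) + (ρ + 1) - 1 = n - j - 1 + ρ := by omega
    have h4 : n - (j + 1) = n - j - 1 := by omega
    have h5 : n - j + ρ - 1 = n - j - 1 + ρ := by omega
    rw [h1, h3, h4, h5, h2, Nat.choose_succ_succ]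
    have hf : ((j.factorial : ℂ)) ≠ 0 := Nat.cast_ne_zero.mpr j.factorial_ne_zero
    have hf1 : ((j : ℂ) + 1) ≠ 0 := by
      exact_mod_cast (Nat.cast_ne_zero.mpr (Nat.succ_ne_zero j) : ((j + 1 : ℕ) : ℂ) ≠ 0)
    rw [Nat.factorial_succ]
    push_cast
    field_simp
    ring
  · subst h
    rw [if_pos le_rfl, if_pos le_rfl, if_neg (by omega)]
    simp [Nat.sub_self]
    ring
  · rw [if_neg (by omega), if_neg (by omega), if_neg (by omega)]
    simp

lemma yy_zero (n : ℕ) : yy 0 n = C ((n.factorial : ℂ)⁻¹) * X ^ n := by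
  ext j
  rw [yy_coeff, coeff_C_mul, coeff_X_pow]
  rcases lt_trichotomy j n with h | h | h
  · rw [if_pos h.le, if_neg h.ne]
    have : (n - j - 1).choose (n - j) = 0 := Nat.choose_eq_zero_of_lt (by omega)
    simp [this]
  · subst h; simp [Nat.sub_self, div_eq_inv_mul]
  · rw [if_neg (by omega), if_neg (by omega)]; simp

noncomputable def dd : Module.End ℂ (Polynomial ℂ) := derivative

lemma dd_sub_one_apply (p : Polynomial ℂ) : (dd - 1) p = derivative p - p := rfl

lemma neg_one_End : (-1 : Module.End ℂ (Polynomial ℂ)) = (-1 : ℂ) • 1 := by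
  ext q; simp

lemma sum_eq_pow (ρ : ℕ) (p : Polynomial ℂ) :
    ∑ k ∈ range (ρ + 1), C ((-1 : ℂ) ^ (ρ - k) * (ρ.choose k : ℂ)) * (derivative^[k] p) =
      ((dd - 1) ^ ρ) p := by
  have hc : Commute dd (-1 : Module.End ℂ (Polynomial ℂ)) :=
    Commute.neg_right (Commute.one_right dd)
  rw [sub_eq_add_neg, hc.add_pow ρ, LinearMap.sum_apply]
  refine Finset.sum_congr rfl fun k hk => ?_
  have hpow : ∀ q : Polynomial ℂ, (dd ^ k) q = derivative^[k] q := fun q => by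
    rw [Module.End.pow_apply]; rfl
  rw [Module.End.mul_apply, Module.End.mul_apply, Module.End.natCast_apply,
    neg_one_End, _root_.smul_pow, one_pow, LinearMap.smul_apply, Module.End.one_apply,
    ← Nat.cast_smul_eq_nsmul ℂ, map_smul, map_smul, hpow, smul_smul, smul_eq_C_mul]

lemma pow_apply_yy (ρ n m : ℕ) (hm : m ≤ ρ) :
    ((dd - 1) ^ m) (yy ρ n) = yy (ρ - m) n := by
  induction m with
  | zero => simp
  | succ m ih =>
    have hm' : m ≤ ρ := by omega
    rw [pow_succ', Module.End.mul_apply, ih hm', dd_sub_one_apply]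
    obtain ⟨t, ht⟩ : ∃ t, ρ - m = t + 1 := ⟨ρ - m - 1, by omega⟩
    rw [ht, yy_step]
    congr 1
    omega

theorem stmt10 (n ρ : ℕ) (hρ : 1 ≤ ρ) :
    X * ∑ k ∈ range (ρ + 1),
          C ((-1 : ℂ) ^ (ρ - k) * (ρ.choose k : ℂ)) * (derivative^[k + 1] (yy ρ n)) -
      C (n : ℂ) * ∑ k ∈ range (ρ + 1),
          C ((-1 : ℂ) ^ (ρ - k) * (ρ.choose k : ℂ)) * (derivative^[k] (yy ρ n)) = 0 := by
  have h1 : ∑ k ∈ range (ρ + 1),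
      C ((-1 : ℂ) ^ (ρ - k) * (ρ.choose k : ℂ)) * (derivative^[k + 1] (yy ρ n)) =
      ((dd - 1) ^ ρ) (derivative (yy ρ n)) := by
    rw [← sum_eq_pow]
    refine Finset.sum_congr rfl fun k _ => ?_
    rw [Function.iterate_succ_apply]
  have hcomm : ((dd - 1) ^ ρ) * dd = dd * ((dd - 1) ^ ρ) := by
    have : Commute dd (dd - 1) := Commute.sub_right (Commute.refl dd) (Commute.one_right dd)
    exact (this.pow_right ρ).symm.eq
  have h2 : ((dd - 1) ^ ρ) (derivative (yy ρ n)) = derivative (((dd - 1) ^ ρ) (yy ρ n)) := by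
    have := congrArg (fun f => f (yy ρ n)) hcomm
    simpa [Module.End.mul_apply, dd] using this
  have h3 : ((dd - 1) ^ ρ) (yy ρ n) = yy 0 n := by
    have := pow_apply_yy ρ n ρ le_rfl
    simpa using this
  rw [h1, sum_eq_pow, h2, h3, yy_zero]
  rcases n with _ | m
  · simp
  · rw [derivative_C_mul, derivative_X_pow]
    simp only [Nat.add_sub_cancel]
    push_cast
    ring
end

section
/- For every nonnegative integer n and positive integer ρ, the polynomial y = y_n(ρ; ·) satisfies the second-order differential equation x y''(x) - (x + ρ - 1) y'(x) - n (y'(x) - y(x)) = 0 for all x. -/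
open Polynomial Finset

lemma choose_key (m r : ℕ) (hm : 1 ≤ m) :
    (m + r) * Nat.choose (m - 1 + r) (m - 1) = m * Nat.choose (m + r) m := by
  obtain ⟨s, rfl⟩ := Nat.exists_eq_add_of_le hm
  have h := Nat.add_one_mul_choose_eq (s + r) s
  have e1 : 1 + s - 1 = s := by omega
  rw [e1]
  have e2 : 1 + s + r = s + r + 1 := by omega
  rw [e2, h, Nat.add_comm 1 s]
  ring
  
lemma coeff_yy (r n k : ℕ) :
    (yy (r+1) n).coeff k =
      (-1:ℂ)^(r+1) * (if k ≤ n then ((n - k + r).choose (n - k) : ℂ) / (k.factorial : ℂ) else 0) := by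
  simp only [yy, coeff_C_mul, finset_sum_coeff, coeff_C_mul, coeff_X_pow, mul_ite, mul_one,
    mul_zero]
  rw [Finset.sum_ite_eq (range (n + 1)) k]
  have : n - k + (r + 1) - 1 = n - k + r := by omega
  rw [this]
  simp [Nat.lt_succ_iff, mul_ite]

theorem stmt11 (n ρ : ℕ) (hρ : 1 ≤ ρ) :
    X * derivative (derivative (yy ρ n)) - (X + C ((ρ : ℂ) - 1)) * derivative (yy ρ n) -
      C (n : ℂ) * (derivative (yy ρ n) - yy ρ n) = 0 := by
  obtain ⟨r, rfl⟩ : ∃ r, ρ = r + 1 := ⟨ρ - 1, by omega⟩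
  ext K
  rcases K with _ | k
  · simp only [coeff_sub, coeff_zero, add_mul, coeff_add, coeff_C_mul, coeff_derivative,
      mul_coeff_zero, coeff_X_zero, zero_mul, coeff_C_zero, coeff_yy]
    norm_num
    rcases Nat.eq_zero_or_pos n with hn | hn
    · subst hn; simp
    · have hn' : 1 ≤ n := hn
      simp only [if_pos hn']
      have key := choose_key n r hn
      have keyC := congrArg (Nat.cast (R := ℂ)) key
      push_cast at keyC
      linear_combination (-(-1 : ℂ) ^ (r + 1)) * keyC
  · simp only [coeff_sub, coeff_zero, add_mul, coeff_add, coeff_C_mul, coeff_derivative,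
      coeff_X_mul, coeff_yy]
    rcases le_or_gt (k + 1 + 1) n with h2 | h2
    · have h1 : k + 1 ≤ n := by omega
      obtain ⟨d, rfl⟩ : ∃ d, n = k + 1 + 1 + d := ⟨n - (k + 1 + 1), by omega⟩
      rw [if_pos h2, if_pos h1]
      have e1 : k + 1 + 1 + d - (k + 1 + 1) = d := by omega
      have e2 : k + 1 + 1 + d - (k + 1) = d + 1 := by omega
      rw [e1, e2]
      have key := choose_key (d + 1) r (by omega)
      simp only [Nat.add_sub_cancel] at key
      have keyC := congrArg (Nat.cast (R := ℂ)) key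
      push_cast at keyC
      rw [Nat.factorial_succ (k + 1)]
      push_cast
      have hF : ((k + 1).factorial : ℂ) ≠ 0 := Nat.cast_ne_zero.2 (Nat.factorial_ne_zero _)
      have hk2 : ((k : ℂ) + 1 + 1) ≠ 0 := by exact_mod_cast Nat.succ_ne_zero (k + 1)
      field_simp
      linear_combination (-(-1 : ℂ) ^ (r + 1)) * keyC
    · rcases le_or_gt (k + 1) n with h1 | h1
      · have hn : n = k + 1 := by omega
        rw [if_neg (show ¬ k + 1 + 1 ≤ n by omega), if_pos h1, hn]
        push_cast
        ring
      · rw [if_neg (show ¬ k + 1 + 1 ≤ n by omega), if_neg (show ¬ k + 1 ≤ n by omega)]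
        ring
end
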